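/- Let y = A_j x_j + Σ_{l∈U\{j}} A_l x_l + n with blocks of full column rank. Then ‖(A_j^H A_j)^{-1/2} A_j^H y‖_2 ≥ σ_min(A_j)‖x_j‖_2 − μ_B Σ_{l∈U\{j}} ‖x_l‖_2 − ‖n‖_2, where μ_B = max_{i≠l} ‖(A_i^H A_i)^{-1/2} A_i^H A_l‖_2 and we assume ‖(A_j^H A_j)^{-1/2} A_j^H‖_2 ≤ 1. -/

import Mathlib

/-! Put `W = (A_jᴴ A_j)^{-1/2} A_jᴴ`, so that `ncorr (A j) y = ‖W y‖`. The signal term is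
`W A_j x_j = (A_jᴴ A_j)^{1/2} x_j`, and since this square root is Hermitian with square `A_jᴴ A_j`
its norm is `‖A_j x_j‖ ≥ σ_min(A_j) ‖x_j‖`. Each interference term `W A_l x_l` is at most
`μ_B ‖x_l‖` by block coherence, the noise term `W n` at most `‖n‖` since `‖W‖ ≤ 1`, and the reverse
triangle inequality combines the three. -/

open Matrix Finset
open scoped ComplexOrder

noncomputable section
open scoped Classical

def enorm {n : ℕ} (v : Fin n → ℂ) : ℝ := ‖(WithLp.equiv 2 (Fin n → ℂ)).symm v‖

def snorm {m n : ℕ} (A : Matrix (Fin m) (Fin n) ℂ) : ℝ :=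
  ‖LinearMap.toContinuousLinearMap (Matrix.toEuclideanLin A)‖

def invSqrt {n : ℕ} (M : Matrix (Fin n) (Fin n) ℂ) : Matrix (Fin n) (Fin n) ℂ :=
  if h : M.PosSemidef then ((h.1.eigenvectorUnitary : Matrix (Fin n) (Fin n) ℂ) * diagonal (fun i => ((Real.sqrt (h.1.eigenvalues i) : ℝ) : ℂ)) *
      (star h.1.eigenvectorUnitary : Matrix (Fin n) (Fin n) ℂ))⁻¹ else 0

def msqrt {n : ℕ} (M : Matrix (Fin n) (Fin n) ℂ) : Matrix (Fin n) (Fin n) ℂ :=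
  if h : M.PosSemidef then ((h.1.eigenvectorUnitary : Matrix (Fin n) (Fin n) ℂ) * diagonal (fun i => ((Real.sqrt (h.1.eigenvalues i) : ℝ) : ℂ)) *
      (star h.1.eigenvectorUnitary : Matrix (Fin n) (Fin n) ℂ)) else 0

/-- normalized correlation ‖(AᴴA)^{-1/2} Aᴴ r‖₂ -/
def ncorr {m k : ℕ} (A : Matrix (Fin m) (Fin k) ℂ) (r : Fin m → ℂ) : ℝ :=
  enorm ((invSqrt (Aᴴ * A) * Aᴴ).mulVec r)

end

namespace BlockSparse

section EuclideanNorm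

variable {m n k : ℕ}

theorem enorm_eq_norm_toLp (v : Fin n → ℂ) : _root_.enorm v = ‖WithLp.toLp 2 v‖ := rfl

theorem enorm_nonneg (v : Fin n → ℂ) : 0 ≤ _root_.enorm v := norm_nonneg _

theorem enorm_sub_enorm_le_enorm_add (v w : Fin n → ℂ) :
    _root_.enorm v - _root_.enorm w ≤ _root_.enorm (v + w) := by
  simpa [enorm_eq_norm_toLp] using norm_sub_norm_le (WithLp.toLp 2 v) (-WithLp.toLp 2 w)

theorem enorm_sum_le {ι : Type*} (s : Finset ι) (f : ι → Fin n → ℂ) :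
    _root_.enorm (∑ i ∈ s, f i) ≤ ∑ i ∈ s, _root_.enorm (f i) := by
  simpa [enorm_eq_norm_toLp] using norm_sum_le s (fun i => WithLp.toLp 2 (f i))

theorem enorm_mulVec_le (A : Matrix (Fin m) (Fin n) ℂ) (v : Fin n → ℂ) :
    _root_.enorm (A *ᵥ v) ≤ snorm A * _root_.enorm v :=
  (toEuclideanLin A).toContinuousLinearMap.le_opNorm (WithLp.toLp 2 v)

theorem enorm_sq_eq_star_dotProduct (v : Fin n → ℂ) :
    ((_root_.enorm v : ℝ) : ℂ) ^ 2 = star v ⬝ᵥ v := by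
  have h := inner_self_eq_norm_sq_to_K (𝕜 := ℂ) (WithLp.toLp 2 v)
  rw [EuclideanSpace.inner_eq_star_dotProduct, dotProduct_comm] at h
  exact h.symm

theorem star_mulVec_dotProduct_mulVec (S : Matrix (Fin k) (Fin n) ℂ) (v : Fin n → ℂ) :
    star (S *ᵥ v) ⬝ᵥ (S *ᵥ v) = star v ⬝ᵥ ((Sᴴ * S) *ᵥ v) := by
  rw [star_mulVec, ← dotProduct_mulVec, mulVec_mulVec]

theorem enorm_mulVec_eq_of_conjTranspose_mul_self_eq {A : Matrix (Fin m) (Fin n) ℂ}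
    {S : Matrix (Fin k) (Fin n) ℂ} (hSA : Sᴴ * S = Aᴴ * A) (v : Fin n → ℂ) :
    _root_.enorm (S *ᵥ v) = _root_.enorm (A *ᵥ v) := by
  have hsq : ((_root_.enorm (S *ᵥ v) : ℝ) : ℂ) ^ 2 = ((_root_.enorm (A *ᵥ v) : ℝ) : ℂ) ^ 2 := by
    rw [enorm_sq_eq_star_dotProduct, enorm_sq_eq_star_dotProduct, star_mulVec_dotProduct_mulVec,
      star_mulVec_dotProduct_mulVec, hSA]
  exact (sq_eq_sq₀ (enorm_nonneg _) (enorm_nonneg _)).mp (mod_cast hsq)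

end EuclideanNorm

section MatrixSqrt

variable {n : ℕ}

theorem invSqrt_eq_inv_msqrt (M : Matrix (Fin n) (Fin n) ℂ) : invSqrt M = (msqrt M)⁻¹ := by
  unfold invSqrt msqrt
  split_ifs <;> simp

theorem msqrt_isHermitian {M : Matrix (Fin n) (Fin n) ℂ} (hM : M.PosSemidef) :
    (msqrt M).IsHermitian := by
  rw [msqrt, dif_pos hM, IsHermitian, conjTranspose_mul, conjTranspose_mul, star_eq_conjTranspose,
    conjTranspose_conjTranspose, diagonal_conjTranspose, Matrix.mul_assoc]
  congr 3
  funext i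
  simp

theorem msqrt_mul_self {M : Matrix (Fin n) (Fin n) ℂ} (hM : M.PosSemidef) :
    msqrt M * msqrt M = M := by
  set U : Matrix (Fin n) (Fin n) ℂ := (hM.1.eigenvectorUnitary : Matrix (Fin n) (Fin n) ℂ)
  set D : Matrix (Fin n) (Fin n) ℂ := diagonal fun i => ((√(hM.1.eigenvalues i) : ℝ) : ℂ)
  have hUU : star U * U = 1 := hM.1.eigenvectorUnitary.2.1
  have hDD : D * D = diagonal (RCLike.ofReal ∘ hM.1.eigenvalues) := by
    rw [diagonal_mul_diagonal]
    congr 1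
    funext i
    simp [← Complex.ofReal_mul, Real.mul_self_sqrt (hM.eigenvalues_nonneg i)]
  have hspec := hM.1.spectral_theorem
  rw [Unitary.conjStarAlgAut_apply] at hspec
  calc msqrt M * msqrt M = U * (D * (star U * U) * D) * star U := by
        simp only [msqrt, dif_pos hM, U, D, Matrix.mul_assoc]
    _ = M := by rw [hUU, Matrix.mul_one, hDD]; exact hspec.symm

theorem invSqrt_mul_self {M : Matrix (Fin n) (Fin n) ℂ} (hM : M.PosDef) :
    invSqrt M * M = msqrt M := by
  have hunit : IsUnit (msqrt M).det := by
    refine isUnit_of_mul_isUnit_left (y := (msqrt M).det) ?_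
    rw [← det_mul, msqrt_mul_self hM.posSemidef]
    exact (isUnit_iff_isUnit_det M).mp hM.isUnit
  calc invSqrt M * M = (msqrt M)⁻¹ * (msqrt M * msqrt M) := by
        rw [invSqrt_eq_inv_msqrt, msqrt_mul_self hM.posSemidef]
    _ = msqrt M := nonsing_inv_mul_cancel_left _ _ hunit

end MatrixSqrt

section NormalizedCorrelation

variable {m k : ℕ} (A : Matrix (Fin m) (Fin k) ℂ)

theorem ncorr_sub_ncorr_le_ncorr_add (r s : Fin m → ℂ) :
    ncorr A r - ncorr A s ≤ ncorr A (r + s) := by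
  simpa only [ncorr, mulVec_add] using enorm_sub_enorm_le_enorm_add _ _

theorem ncorr_sum_le {ι : Type*} (s : Finset ι) (r : ι → Fin m → ℂ) :
    ncorr A (∑ i ∈ s, r i) ≤ ∑ i ∈ s, ncorr A (r i) := by
  simpa only [ncorr, mulVec_sum] using enorm_sum_le _ _

theorem ncorr_le (r : Fin m → ℂ) :
    ncorr A r ≤ snorm (invSqrt (Aᴴ * A) * Aᴴ) * _root_.enorm r :=
  enorm_mulVec_le _ _

theorem ncorr_mulVec_le {p : ℕ} (B : Matrix (Fin m) (Fin p) ℂ) (v : Fin p → ℂ) :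
    ncorr A (B *ᵥ v) ≤ snorm (invSqrt (Aᴴ * A) * (Aᴴ * B)) * _root_.enorm v := by
  rw [ncorr, mulVec_mulVec, Matrix.mul_assoc]
  exact enorm_mulVec_le _ _

end NormalizedCorrelation

theorem ncorr_self_mulVec {m k : ℕ} {A : Matrix (Fin m) (Fin k) ℂ} (hA : (Aᴴ * A).PosDef)
    (v : Fin k → ℂ) : ncorr A (A *ᵥ v) = _root_.enorm (A *ᵥ v) := by
  rw [ncorr, mulVec_mulVec, Matrix.mul_assoc, invSqrt_mul_self hA]
  exact enorm_mulVec_eq_of_conjTranspose_mul_self_eq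
    (by rw [(msqrt_isHermitian hA.posSemidef).eq, msqrt_mul_self hA.posSemidef]) v

end BlockSparse

open BlockSparse

/-- lower bound on the normalized correlation of a fixed used block. -/
theorem used_block_correlation_lower_bound
    {M B : ℕ} {Ni : Fin B → ℕ}
    (A : (i : Fin B) → Matrix (Fin M) (Fin (Ni i)) ℂ)
    (x : (i : Fin B) → Fin (Ni i) → ℂ)
    (n : Fin M → ℂ) (U : Finset (Fin B)) (j : Fin B)
    (hj : j ∈ U)
    (hrank : ∀ i, ((A i)ᴴ * A i).PosDef)
    (μB σj : ℝ)
    (hμ : ∀ i l, i ≠ l → snorm (invSqrt ((A i)ᴴ * A i) * ((A i)ᴴ * A l)) ≤ μB)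
    (hσ : ∀ v : Fin (Ni j) → ℂ, σj * _root_.enorm v ≤ _root_.enorm ((A j).mulVec v))
    (hnorm : snorm (invSqrt ((A j)ᴴ * A j) * (A j)ᴴ) ≤ 1)
    (y : Fin M → ℂ)
    (hy : y = (∑ l ∈ U, (A l).mulVec (x l)) + n) :
    σj * _root_.enorm (x j) - μB * (∑ l ∈ U.erase j, _root_.enorm (x l)) - _root_.enorm n
      ≤ ncorr (A j) y := by
  have hsplit : y = (A j *ᵥ x j + ∑ l ∈ U.erase j, A l *ᵥ x l) + n := by
    rw [hy, ← add_sum_erase U _ hj]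
  have hsignal : σj * _root_.enorm (x j) ≤ ncorr (A j) (A j *ᵥ x j) :=
    ncorr_self_mulVec (hrank j) (x j) ▸ hσ (x j)
  have hcross : ∑ l ∈ U.erase j, ncorr (A j) (A l *ᵥ x l)
      ≤ μB * ∑ l ∈ U.erase j, _root_.enorm (x l) := by
    rw [mul_sum]
    refine sum_le_sum fun l hl => (ncorr_mulVec_le _ _ _).trans ?_
    exact mul_le_mul_of_nonneg_right (hμ j l (ne_of_mem_erase hl).symm) (enorm_nonneg _)
  have hnoise : ncorr (A j) n ≤ _root_.enorm n :=
    (ncorr_le _ _).trans (mul_le_of_le_one_left (enorm_nonneg _) hnorm)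
  have hsum := ncorr_sum_le (A j) (U.erase j) fun l => A l *ᵥ x l
  have htri₁ := ncorr_sub_ncorr_le_ncorr_add (A j) (A j *ᵥ x j) (∑ l ∈ U.erase j, A l *ᵥ x l)
  have htri₂ := ncorr_sub_ncorr_le_ncorr_add (A j) (A j *ᵥ x j + ∑ l ∈ U.erase j, A l *ᵥ x l) n
  rw [hsplit]
  linarith
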